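/- Let G be a graph of order n with a minimum-weight Roman dominating function f = (B_0, B_1, B_2). Let D_1, D_2 be the sets of non-isolated vertices in the subgraphs induced by B_1 and B_2 respectively, and D_{12} the set of non-isolated vertices of the subgraph induced by B_1 ∪ B_2. Then for every integer t ≥ 2: γ_R(S(G,t)) ≤ n^{t-2}(n·γ_R(G) − |B_2| − |D_{12}| + |D_1|/2). -/

import Mathlib

variable {V : Type*}

/-- A Roman dominating function: every vertex with value 0 has a neighbor with value 2. -/
def IsRDF (G : SimpleGraph V) (f : V → Fin 3) : Prop :=
  ∀ v, f v = 0 → ∃ u, G.Adj u v ∧ f u = 2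

/-- The weight of a Roman dominating function. -/
def romanWeight [Fintype V] (f : V → Fin 3) : ℕ := ∑ v, (f v : ℕ)

/-- The Roman domination number. -/
noncomputable def gammaR [Fintype V] (G : SimpleGraph V) : ℕ :=
  sInf {k | ∃ f : V → Fin 3, IsRDF G f ∧ romanWeight f = k}

/-- A dominating set. -/
def IsDomSet (G : SimpleGraph V) (D : Set V) : Prop :=
  ∀ v, v ∈ D ∨ ∃ u ∈ D, G.Adj u v

/-- The domination number. -/
noncomputable def gamma [Fintype V] (G : SimpleGraph V) : ℕ :=
  sInf {k | ∃ D : Set V, IsDomSet G D ∧ D.ncard = k}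

/-- The generalized Sierpiński graph `S(G,t)` on words of length `t` over `V`. -/
def sierpinski (G : SimpleGraph V) (t : ℕ) : SimpleGraph (Fin t → V) where
  Adj x y := ∃ i : Fin t, (∀ j, j < i → x j = y j) ∧ G.Adj (x i) (y i) ∧
    (∀ j, i < j → x j = y i ∧ y j = x i)
  symm := by
    constructor
    rintro x y ⟨i, h1, h2, h3⟩
    exact ⟨i, fun j hj => (h1 j hj).symm, h2.symm, fun j hj => ⟨(h3 j hj).2, (h3 j hj).1⟩⟩
  loopless := by
    constructor
    rintro x ⟨i, -, h2, -⟩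
    exact G.ne_of_adj h2 rfl


/-!
Lifting a Roman dominating function of `S(G,t)` along `w ↦ Fin.tail w` to every copy of
`S(G,t)` inside `S(G,t+1)` gives `γ_R(S(G,t)) ≤ n^(t-2) γ_R(S(G,2))`, so only `t = 2` matters.
On `S(G,2)` start from `f` copied into each copy `x·V`, of weight `n γ_R(G)`, and save locally:
* if `f x = 2`, the extreme vertex `xx` can drop to `1`, since any `xu` with `f u = 0` and
  `u ~ x` is dominated across the bridge edge by `ux`; it can drop to `0` if `x ∈ D₂`;
* for an arc `x → y` of `G[B₁]`, raising `xy` to `2` lets both `xx` and `yx` drop to `0`.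
This gives `γ_R(S(G,2)) ≤ n γ_R(G) - |B₂| - |D₂| - #arcs`. Orienting from every vertex of `D₁`
an edge to a chosen partner, and keeping one arc of each `2`-cycle, gives at least `|D₁|/2`
arcs. Minimality of `f` rules out edges between `B₁` and `B₂`, so `|D₁₂| ≤ |D₁| + |D₂|`.
-/

open Finset Function

section Roman

variable [Fintype V] {G : SimpleGraph V}

theorem gammaR_le_romanWeight {f : V → Fin 3} (hf : IsRDF G f) : gammaR G ≤ romanWeight f :=
  Nat.sInf_le ⟨f, hf, rfl⟩

theorem exists_isRDF_romanWeight_eq_gammaR (G : SimpleGraph V) :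
    ∃ f, IsRDF G f ∧ romanWeight f = gammaR G :=
  Nat.sInf_mem (s := {k | ∃ f : V → Fin 3, IsRDF G f ∧ romanWeight f = k})
    ⟨_, fun _ => 2, fun _ h => absurd h (by simp), rfl⟩

theorem romanWeight_update [DecidableEq V] (f : V → Fin 3) (u : V) (a : Fin 3) :
    romanWeight (update f u a) + f u = romanWeight f + a := by
  unfold romanWeight
  rw [← add_sum_erase _ _ (mem_univ u), ← add_sum_erase _ _ (mem_univ u), update_self,
    sum_congr rfl fun v hv => by rw [update_of_ne (ne_of_mem_erase hv)]]
  ring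

-- Otherwise the value of `u` could be lowered to `0`.
theorem IsRDF.ne_two_of_adj_of_eq_one {f : V → Fin 3} (hf : IsRDF G f)
    (hmin : romanWeight f = gammaR G) {u v : V} (huv : G.Adj u v) (hu : f u = 1) :
    f v ≠ 2 := by
  classical
  intro hv
  have hvu : v ≠ u := fun e => by simp [e, hu] at hv
  have hf' : IsRDF G (update f u 0) := by
    intro w hw
    by_cases hwu : w = u
    · subst hwu
      exact ⟨v, huv.symm, by rwa [update_of_ne hvu]⟩
    · obtain ⟨d, hd, hd2⟩ := hf w (by rwa [update_of_ne hwu] at hw)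
      have hdu : d ≠ u := fun e => by simp [e, hu] at hd2
      exact ⟨d, hd, by rwa [update_of_ne hdu]⟩
  have hdrop : romanWeight (update f u 0) + 1 = romanWeight f := by
    simpa [hu] using romanWeight_update f u 0
  have := gammaR_le_romanWeight hf'
  omega

end Roman

def nonIsolated (G : SimpleGraph V) (S : Set V) : Set V :=
  {v | v ∈ S ∧ ∃ u, G.Adj u v ∧ u ∈ S}

theorem nonIsolated_union_subset {G : SimpleGraph V} {S T : Set V}
    (h : ∀ u ∈ S, ∀ v ∈ T, ¬ G.Adj u v) :
    nonIsolated G (S ∪ T) ⊆ nonIsolated G S ∪ nonIsolated G T := by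
  rintro v ⟨hv | hv, u, huv, hu | hu⟩
  · exact Or.inl ⟨hv, u, huv, hu⟩
  · exact absurd huv (fun e => h v hv u hu e.symm)
  · exact absurd huv (h u hu v hv)
  · exact Or.inr ⟨hv, u, huv, hu⟩

theorem ncard_le_two_mul_ncard_of_mapsTo {α : Type*} [LinearOrder α] {s : Set α}
    (hs : s.Finite) {p : α → α} (hmaps : Set.MapsTo p s s) (hp : ∀ x ∈ s, p x ≠ x) :
    s.ncard ≤ 2 * {x ∈ s | p (p x) ≠ x ∨ x < p x}.ncard := by
  set C := {x ∈ s | p (p x) ≠ x ∨ x < p x}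
  set U := {x ∈ s | p (p x) = x ∧ p x < x}
  have hC : C.Finite := hs.subset fun _ h => h.1
  have hsub : s ⊆ C ∪ U := by
    intro x hx
    by_cases h : p (p x) ≠ x ∨ x < p x
    · exact Or.inl ⟨hx, h⟩
    · push Not at h
      exact Or.inr ⟨hx, h.1, lt_of_le_of_ne h.2 (hp x hx)⟩
  -- `p` sends the lower end of each `2`-cycle to its upper end
  have hUC : U.ncard ≤ C.ncard := by
    refine Set.ncard_le_ncard_of_injOn p (fun x ⟨hx, hpp, hlt⟩ => ⟨hmaps hx, Or.inr ?_⟩)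
      (fun x ⟨_, hx, _⟩ y ⟨_, hy, _⟩ e => by rw [← hx, ← hy, e]) hC
    rwa [hpp]
  calc s.ncard ≤ (C ∪ U).ncard := Set.ncard_le_ncard hsub (hC.union (hs.subset fun _ h => h.1))
    _ ≤ C.ncard + U.ncard := Set.ncard_union_le _ _
    _ ≤ 2 * C.ncard := by omega

theorem sum_ite_mem_eq_ncard [Fintype V] (s : Set V) [DecidablePred (· ∈ s)] :
    ∑ x, (if x ∈ s then 1 else 0) = s.ncard := by
  rw [sum_boole, Set.ncard_eq_toFinset_card']
  simp

section Sierpinski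

variable {G : SimpleGraph V}

theorem sierpinski_adj_cons {t : ℕ} {w w' : Fin t → V} (h : (sierpinski G t).Adj w w') (a : V) :
    (sierpinski G (t + 1)).Adj (Fin.cons a w) (Fin.cons a w') := by
  obtain ⟨i, hlt, hadj, hgt⟩ := h
  refine ⟨i.succ, fun j hj => ?_, by simpa using hadj, fun j hj => ?_⟩
  · cases j using Fin.cases with
    | zero => rfl
    | succ j => simpa using hlt j (Fin.succ_lt_succ_iff.mp hj)
  · cases j using Fin.cases with
    | zero => exact absurd hj (Fin.not_lt_zero _)
    | succ j => simpa using hgt j (Fin.succ_lt_succ_iff.mp hj)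

theorem IsRDF.comp_tail {t : ℕ} {h : (Fin t → V) → Fin 3} (hh : IsRDF (sierpinski G t) h) :
    IsRDF (sierpinski G (t + 1)) (fun w => h (Fin.tail w)) := by
  intro w hw
  obtain ⟨u, hu, hu2⟩ := hh _ hw
  refine ⟨Fin.cons (w 0) u, ?_, by simpa using hu2⟩
  simpa using sierpinski_adj_cons hu (w 0)

theorem sierpinski_two_adj_of_adj_right {x y y' : V} (h : G.Adj y y') :
    (sierpinski G 2).Adj ![x, y] ![x, y'] :=
  ⟨1, fun j hj => by fin_cases j <;> simp_all, by simpa using h, fun j hj => by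
    fin_cases j <;> simp_all⟩

theorem sierpinski_two_adj_swap {x y : V} (h : G.Adj x y) :
    (sierpinski G 2).Adj ![x, y] ![y, x] :=
  ⟨0, fun j hj => by fin_cases j <;> simp_all, by simpa using h, fun j hj => by
    fin_cases j <;> simp_all⟩

theorem isRDF_sierpinski_two {g : V → V → Fin 3}
    (hg : ∀ x y, g x y = 0 →
      (∃ y', G.Adj y y' ∧ g x y' = 2) ∨ (G.Adj x y ∧ g y x = 2)) :
    IsRDF (sierpinski G 2) (fun w => g (w 0) (w 1)) := by
  intro w hw
  have hw2 : w = ![w 0, w 1] := by ext i; fin_cases i <;> rfl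
  rcases hg _ _ hw with ⟨y', hadj, hy'⟩ | ⟨hadj, hyx⟩
  · exact ⟨![w 0, y'], hw2 ▸ (sierpinski_two_adj_of_adj_right hadj).symm, hy'⟩
  · exact ⟨![w 1, w 0], hw2 ▸ (sierpinski_two_adj_swap hadj).symm, hyx⟩

variable [Fintype V]

theorem romanWeight_comp_tail {t : ℕ} (h : (Fin t → V) → Fin 3) :
    romanWeight (fun w : Fin (t + 1) → V => h (Fin.tail w)) = Fintype.card V * romanWeight h := by
  unfold romanWeight
  rw [← (Fin.consEquiv fun _ => V).sum_comp, Fintype.sum_prod_type]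
  simp [Fin.consEquiv, Finset.card_univ]

theorem romanWeight_sierpinski_two (g : V → V → Fin 3) :
    romanWeight (fun w : Fin 2 → V => g (w 0) (w 1)) = ∑ x, ∑ y, (g x y : ℕ) := by
  unfold romanWeight
  rw [← (piFinTwoEquiv fun _ => V).symm.sum_comp, Fintype.sum_prod_type]
  rfl

theorem gammaR_sierpinski_succ_le (G : SimpleGraph V) (t : ℕ) :
    gammaR (sierpinski G (t + 1)) ≤ Fintype.card V * gammaR (sierpinski G t) := by
  obtain ⟨h, hh, hw⟩ := exists_isRDF_romanWeight_eq_gammaR (sierpinski G t)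
  calc gammaR (sierpinski G (t + 1))
      ≤ romanWeight (fun w : Fin (t + 1) → V => h (Fin.tail w)) :=
        gammaR_le_romanWeight hh.comp_tail
    _ = _ := by rw [romanWeight_comp_tail, hw]

theorem gammaR_sierpinski_add_le (G : SimpleGraph V) (t k : ℕ) :
    gammaR (sierpinski G (t + k)) ≤ Fintype.card V ^ k * gammaR (sierpinski G t) := by
  induction k with
  | zero => simp
  | succ k ih =>
    calc gammaR (sierpinski G (t + (k + 1))) ≤ Fintype.card V * gammaR (sierpinski G (t + k)) :=
          gammaR_sierpinski_succ_le G (t + k)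
      _ ≤ Fintype.card V * (Fintype.card V ^ k * gammaR (sierpinski G t)) := by gcongr
      _ = _ := by ring

end Sierpinski

section Partner

variable {G : SimpleGraph V} {S : Set V} {x y : V}

open Classical in
noncomputable def partner (G : SimpleGraph V) (S : Set V) (x : V) : V :=
  if h : x ∈ nonIsolated G S then h.2.choose else x

theorem adj_partner (h : x ∈ nonIsolated G S) : G.Adj (partner G S x) x := by
  rw [partner, dif_pos h]; exact h.2.choose_spec.1

theorem partner_mem (h : x ∈ nonIsolated G S) : partner G S x ∈ S := by
  rw [partner, dif_pos h]; exact h.2.choose_spec.2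

theorem partner_mem_nonIsolated (h : x ∈ nonIsolated G S) :
    partner G S x ∈ nonIsolated G S :=
  ⟨partner_mem h, x, (adj_partner h).symm, h.1⟩

variable [LinearOrder V]

/-- Orient each edge `{x, partner x}` away from `x`, keeping only the one from the smaller
vertex when two vertices are each other's partners. -/
def arcTails (G : SimpleGraph V) (S : Set V) : Set V :=
  {x ∈ nonIsolated G S | partner G S (partner G S x) ≠ x ∨ x < partner G S x}

def IsArc (G : SimpleGraph V) (S : Set V) (x y : V) : Prop :=
  x ∈ arcTails G S ∧ y = partner G S x

theorem ncard_nonIsolated_le_two_mul_ncard_arcTails [Finite V] :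
    (nonIsolated G S).ncard ≤ 2 * (arcTails G S).ncard :=
  ncard_le_two_mul_ncard_of_mapsTo (Set.toFinite _) (fun _ => partner_mem_nonIsolated)
    fun _ h => (adj_partner h).ne

theorem IsArc.adj (h : IsArc G S x y) : G.Adj x y :=
  h.2 ▸ (adj_partner h.1.1).symm

theorem IsArc.mem_left (h : IsArc G S x y) : x ∈ S := h.1.1.1

theorem IsArc.mem_right (h : IsArc G S x y) : y ∈ S := h.2 ▸ partner_mem h.1.1

theorem IsArc.not_symm (h : IsArc G S x y) : ¬ IsArc G S y x := by
  rintro ⟨⟨-, hy⟩, hxy⟩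
  obtain ⟨⟨-, hx⟩, rfl⟩ := h
  rw [← hxy] at hx hy
  simp only [ne_eq, not_true_eq_false, false_or] at hx hy
  exact lt_asymm hx hy

end Partner

section TwoLevel

variable [LinearOrder V] {G : SimpleGraph V} {f : V → Fin 3}

open Classical in
/-- The value at the word `xy` of `S(G,2)`, i.e. at the vertex `y` of the copy of `G` indexed
by `x`; the extreme vertices are the words `xx`. -/
noncomputable def sierpinskiTwoRDF (G : SimpleGraph V) (f : V → Fin 3) (x y : V) : Fin 3 :=
  if x = y then
    if x ∈ nonIsolated G (f ⁻¹' {2}) then 0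
    else if f x = 2 then 1
    else if x ∈ arcTails G (f ⁻¹' {1}) then 0
    else f x
  else if IsArc G (f ⁻¹' {1}) x y then 2
  else if IsArc G (f ⁻¹' {1}) y x then 0
  else f y

theorem sierpinskiTwoRDF_of_isArc {x y : V} (h : IsArc G (f ⁻¹' {1}) x y) :
    sierpinskiTwoRDF G f x y = 2 := by
  rw [sierpinskiTwoRDF, if_neg h.adj.ne, if_pos h]

theorem sierpinskiTwoRDF_of_eq_two {x u : V} (hu : f u = 2) (hxu : x ≠ u) :
    sierpinskiTwoRDF G f x u = 2 := by
  have h1 : f u ≠ 1 := by simp [hu]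
  rw [sierpinskiTwoRDF, if_neg hxu, if_neg fun h => h1 h.mem_right, if_neg fun h => h1 h.mem_left,
    hu]

theorem IsRDF.sierpinskiTwoRDF_dominated (hf : IsRDF G f) {x y : V}
    (h0 : sierpinskiTwoRDF G f x y = 0) :
    (∃ y', G.Adj y y' ∧ sierpinskiTwoRDF G f x y' = 2) ∨
      (G.Adj x y ∧ sierpinskiTwoRDF G f y x = 2) := by
  by_cases hxy : x = y
  · subst hxy
    rw [sierpinskiTwoRDF, if_pos rfl] at h0
    by_cases hD2 : x ∈ nonIsolated G (f ⁻¹' {2})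
    · obtain ⟨-, u, hux, hu⟩ := hD2
      exact Or.inl ⟨u, hux.symm, sierpinskiTwoRDF_of_eq_two hu hux.ne.symm⟩
    rw [if_neg hD2] at h0
    by_cases h2 : f x = 2
    · simp [h2] at h0
    rw [if_neg h2] at h0
    by_cases hT : x ∈ arcTails G (f ⁻¹' {1})
    · exact Or.inl ⟨_, (adj_partner hT.1).symm, sierpinskiTwoRDF_of_isArc ⟨hT, rfl⟩⟩
    rw [if_neg hT] at h0
    obtain ⟨u, hux, hu⟩ := hf x h0
    exact Or.inl ⟨u, hux.symm, sierpinskiTwoRDF_of_eq_two hu fun e => h2 (e ▸ hu)⟩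
  · rw [sierpinskiTwoRDF, if_neg hxy] at h0
    by_cases hxy' : IsArc G (f ⁻¹' {1}) x y
    · simp [hxy'] at h0
    by_cases hyx : IsArc G (f ⁻¹' {1}) y x
    · exact Or.inr ⟨hyx.adj.symm, sierpinskiTwoRDF_of_isArc hyx⟩
    rw [if_neg hxy', if_neg hyx] at h0
    obtain ⟨u, huy, hu⟩ := hf y h0
    by_cases hux : u = x
    · subst hux
      exact Or.inr ⟨huy, sierpinskiTwoRDF_of_eq_two hu (Ne.symm hxy)⟩
    · exact Or.inl ⟨u, huy.symm, sierpinskiTwoRDF_of_eq_two hu (Ne.symm hux)⟩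

-- Written without subtraction; summed over all `x, y` the two arc terms cancel.
open Classical in
theorem sierpinskiTwoRDF_add (x y : V) :
    (sierpinskiTwoRDF G f x y : ℕ)
      + (if x = y then (if x ∈ f ⁻¹' {2} then 1 else 0)
          + (if x ∈ nonIsolated G (f ⁻¹' {2}) then 1 else 0)
          + (if x ∈ arcTails G (f ⁻¹' {1}) then 1 else 0) else 0)
      + (if IsArc G (f ⁻¹' {1}) y x then 1 else 0)
      = f y + (if IsArc G (f ⁻¹' {1}) x y then 1 else 0) := by
  by_cases hxy : x = y
  · subst hxy
    have hT1 : x ∈ arcTails G (f ⁻¹' {1}) → f x = 1 := fun h => h.1.1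
    have hD2 : x ∈ nonIsolated G (f ⁻¹' {2}) → f x = 2 := fun h => h.1
    have hnarc : ¬ IsArc G (f ⁻¹' {1}) x x := fun h => h.adj.ne rfl
    rw [sierpinskiTwoRDF, if_pos rfl, if_pos rfl, if_neg hnarc]
    simp only [Set.mem_preimage, Set.mem_singleton_iff] at hT1 hD2 ⊢
    split_ifs <;> grind
  · have hxy1 : IsArc G (f ⁻¹' {1}) x y → f y = 1 := IsArc.mem_right
    have hyx1 : IsArc G (f ⁻¹' {1}) y x → f y = 1 := IsArc.mem_left
    have hasymm : IsArc G (f ⁻¹' {1}) x y → ¬ IsArc G (f ⁻¹' {1}) y x := IsArc.not_symm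
    rw [sierpinskiTwoRDF, if_neg hxy, if_neg hxy]
    split_ifs <;> grind

variable [Fintype V]

open Classical in
theorem sum_sierpinskiTwoRDF_add :
    ∑ x, ∑ y, (sierpinskiTwoRDF G f x y : ℕ) + ((f ⁻¹' {2}).ncard
      + (nonIsolated G (f ⁻¹' {2})).ncard + (arcTails G (f ⁻¹' {1})).ncard)
      = Fintype.card V * romanWeight f := by
  have h := sum_congr rfl fun x (_ : x ∈ univ) => sum_congr rfl fun y (_ : y ∈ univ) =>
    sierpinskiTwoRDF_add (G := G) (f := f) x y
  simp only [sum_add_distrib, sum_ite_eq, mem_univ, if_true, sum_const, card_univ,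
    smul_eq_mul] at h
  rw [sum_comm (f := fun x y => if IsArc G (f ⁻¹' {1}) y x then 1 else 0)] at h
  rw [← sum_ite_mem_eq_ncard, ← sum_ite_mem_eq_ncard, ← sum_ite_mem_eq_ncard, romanWeight]
  omega

theorem IsRDF.gammaR_sierpinski_two_le (hf : IsRDF G f) (hmin : romanWeight f = gammaR G) :
    (gammaR (sierpinski G 2) : ℚ) ≤ Fintype.card V * gammaR G - (f ⁻¹' {2}).ncard
      - (nonIsolated G (f ⁻¹' {1, 2})).ncard + (nonIsolated G (f ⁻¹' {1})).ncard / 2 := by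
  have hle := gammaR_le_romanWeight
    (isRDF_sierpinski_two (g := sierpinskiTwoRDF G f) fun _ _ => hf.sierpinskiTwoRDF_dominated)
  rw [romanWeight_sierpinski_two] at hle
  have hsum := sum_sierpinskiTwoRDF_add (G := G) (f := f)
  rw [hmin] at hsum
  have hD12 : (nonIsolated G (f ⁻¹' {1, 2})).ncard
      ≤ (nonIsolated G (f ⁻¹' {1})).ncard + (nonIsolated G (f ⁻¹' {2})).ncard :=
    (Set.ncard_le_ncard (nonIsolated_union_subset fun u hu v hv huv =>
      hf.ne_two_of_adj_of_eq_one hmin huv hu hv)).trans (Set.ncard_union_le _ _)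
  have hT := ncard_nonIsolated_le_two_mul_ncard_arcTails (G := G) (S := f ⁻¹' {1})
  have hle' := (Nat.cast_le (α := ℚ)).2 hle
  have hsum' := congrArg (Nat.cast (R := ℚ)) hsum
  have hD12' := (Nat.cast_le (α := ℚ)).2 hD12
  have hT' := (Nat.cast_le (α := ℚ)).2 hT
  push_cast at hle' hsum' hD12' hT'
  linarith

end TwoLevel

theorem stmt9 [Fintype V] (G : SimpleGraph V) (n : ℕ) (hn : Fintype.card V = n)
    (f : V → Fin 3) (hf : IsRDF G f) (hmin : romanWeight f = gammaR G)
    (t : ℕ) (ht : 2 ≤ t) :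
    (gammaR (sierpinski G t) : ℚ) ≤ (n : ℚ) ^ (t - 2) *
      ((n : ℚ) * (gammaR G : ℚ) - ({v | f v = 2}.ncard : ℚ)
        - (({v | (f v = 1 ∨ f v = 2) ∧
              ∃ u, G.Adj u v ∧ (f u = 1 ∨ f u = 2)}.ncard : ℚ))
        + ({v | f v = 1 ∧ ∃ u, G.Adj u v ∧ f u = 1}.ncard : ℚ) / 2) := by
  let _ : LinearOrder V := LinearOrder.lift' (Fintype.equivFin V) (Fintype.equivFin V).injective
  obtain ⟨k, rfl⟩ := Nat.exists_eq_add_of_le ht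
  subst hn
  rw [Nat.add_sub_cancel_left]
  calc (gammaR (sierpinski G (2 + k)) : ℚ)
      ≤ (Fintype.card V : ℚ) ^ k * gammaR (sierpinski G 2) := by
        exact_mod_cast gammaR_sierpinski_add_le G 2 k
    _ ≤ _ := by
        gcongr
        exact hf.gammaR_sierpinski_two_le hmin
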